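/- Let θ : I → ℝ be smooth, Ψ : J → ℝ smooth, and define x(s,t) = (∫^s cosh θ(τ) dτ)·(1,0,0) + (∫^s sinh θ(τ) dτ)·(0, sinh t, cosh t) + (0, ∫^t Ψ(τ) cosh τ dτ, ∫^t Ψ(τ) sinh τ dτ). Then ⟨x_s, x_s⟩ = 1, ⟨x_s, x_t⟩ = 0, and ⟨x_t, x_t⟩ = (∫^s sinh θ(τ) dτ + Ψ(t))², where ⟨·,·⟩ is the Minkowski form; in particular, on the open set where ∫^s sinh θ(τ) dτ + Ψ(t) ≠ 0, the surface is spacelike and the constant vector (1,0,0) has tangential projection proportional to x_s. -/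

import Mathlib

open MeasureTheory

noncomputable section

/-- The Minkowski bilinear form on `ℝ³ = ℝ × ℝ × ℝ`. -/
def mink (v w : ℝ × ℝ × ℝ) : ℝ :=
  v.1 * w.1 + v.2.1 * w.2.1 - v.2.2 * w.2.2

/-- Partial derivative in the first variable of an `ℝ³`-valued map. -/
def pds (f : ℝ → ℝ → ℝ × ℝ × ℝ) (s t : ℝ) : ℝ × ℝ × ℝ :=
  (deriv (fun σ => (f σ t).1) s,
   deriv (fun σ => (f σ t).2.1) s,
   deriv (fun σ => (f σ t).2.2) s)

/-- Partial derivative in the second variable of an `ℝ³`-valued map. -/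
def pdt (f : ℝ → ℝ → ℝ × ℝ × ℝ) (s t : ℝ) : ℝ × ℝ × ℝ :=
  (deriv (fun τ => (f s τ).1) t,
   deriv (fun τ => (f s τ).2.1) t,
   deriv (fun τ => (f s τ).2.2) t)

/-- The generic spacelike CPD surface. -/
def xsurf (θ Ψ : ℝ → ℝ) (s₀ t₀ : ℝ) (s t : ℝ) : ℝ × ℝ × ℝ :=
  (∫ τ in s₀..s, Real.cosh (θ τ),
   (∫ τ in s₀..s, Real.sinh (θ τ)) * Real.sinh t +
     ∫ τ in t₀..t, Ψ τ * Real.cosh τ,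
   (∫ τ in s₀..s, Real.sinh (θ τ)) * Real.cosh t +
     ∫ τ in t₀..t, Ψ τ * Real.sinh τ)

lemma hasDerivAt_int {g : ℝ → ℝ} {a b s₀ s : ℝ}
    (hg : ContinuousOn g (Set.Ioo a b))
    (hs₀ : s₀ ∈ Set.Ioo a b) (hs : s ∈ Set.Ioo a b) :
    HasDerivAt (fun x => ∫ τ in s₀..x, g τ) (g s) s := by
  have hsub : Set.uIcc s₀ s ⊆ Set.Ioo a b := Set.ordConnected_Ioo.uIcc_subset hs₀ hs
  have hI : IntervalIntegrable g volume s₀ s := (hg.mono hsub).intervalIntegrable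
  exact intervalIntegral.integral_hasDerivAt_right hI
    (hg.stronglyMeasurableAtFilter isOpen_Ioo s hs)
    (hg.continuousAt (isOpen_Ioo.mem_nhds hs))

theorem stmt_19 (a b c d s₀ t₀ : ℝ) (θ Ψ : ℝ → ℝ)
    (hθ : ContDiffOn ℝ (⊤ : ℕ∞) θ (Set.Ioo a b))
    (hΨ : ContDiffOn ℝ (⊤ : ℕ∞) Ψ (Set.Ioo c d))
    (hs₀ : s₀ ∈ Set.Ioo a b) (ht₀ : t₀ ∈ Set.Ioo c d)
    (s : ℝ) (hs : s ∈ Set.Ioo a b) (t : ℝ) (ht : t ∈ Set.Ioo c d) :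
    mink (pds (xsurf θ Ψ s₀ t₀) s t) (pds (xsurf θ Ψ s₀ t₀) s t) = 1 ∧
    mink (pds (xsurf θ Ψ s₀ t₀) s t) (pdt (xsurf θ Ψ s₀ t₀) s t) = 0 ∧
    mink (pdt (xsurf θ Ψ s₀ t₀) s t) (pdt (xsurf θ Ψ s₀ t₀) s t) =
      ((∫ τ in s₀..s, Real.sinh (θ τ)) + Ψ t) ^ 2 ∧
    ((∫ τ in s₀..s, Real.sinh (θ τ)) + Ψ t ≠ 0 →
      (0 < mink (pds (xsurf θ Ψ s₀ t₀) s t) (pds (xsurf θ Ψ s₀ t₀) s t) *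
             mink (pdt (xsurf θ Ψ s₀ t₀) s t) (pdt (xsurf θ Ψ s₀ t₀) s t) -
           (mink (pds (xsurf θ Ψ s₀ t₀) s t) (pdt (xsurf θ Ψ s₀ t₀) s t)) ^ 2) ∧
      ∀ N : ℝ × ℝ × ℝ,
        mink N (pds (xsurf θ Ψ s₀ t₀) s t) = 0 →
        mink N (pdt (xsurf θ Ψ s₀ t₀) s t) = 0 → mink N N = -1 →
        ∃ p q : ℝ, ((1, 0, 0) : ℝ × ℝ × ℝ) =
          p • pds (xsurf θ Ψ s₀ t₀) s t + q • N) := by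
  have hθc : ContinuousOn θ (Set.Ioo a b) := hθ.continuousOn
  have hΨc : ContinuousOn Ψ (Set.Ioo c d) := hΨ.continuousOn
  set G : ℝ := ∫ τ in s₀..s, Real.sinh (θ τ) with hG
  -- derivatives in s
  have hds1 : HasDerivAt (fun σ => (xsurf θ Ψ s₀ t₀ σ t).1) (Real.cosh (θ s)) s := by
    simpa [xsurf] using
      hasDerivAt_int (g := fun τ => Real.cosh (θ τ))
        (Real.continuous_cosh.comp_continuousOn hθc) hs₀ hs
  have hGint : HasDerivAt (fun σ => ∫ τ in s₀..σ, Real.sinh (θ τ)) (Real.sinh (θ s)) s :=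
    hasDerivAt_int (g := fun τ => Real.sinh (θ τ))
      (Real.continuous_sinh.comp_continuousOn hθc) hs₀ hs
  have hds2 : HasDerivAt (fun σ => (xsurf θ Ψ s₀ t₀ σ t).2.1)
      (Real.sinh (θ s) * Real.sinh t) s := by
    simpa [xsurf] using (hGint.mul_const (Real.sinh t)).add_const
      (∫ τ in t₀..t, Ψ τ * Real.cosh τ)
  have hds3 : HasDerivAt (fun σ => (xsurf θ Ψ s₀ t₀ σ t).2.2)
      (Real.sinh (θ s) * Real.cosh t) s := by
    simpa [xsurf] using (hGint.mul_const (Real.cosh t)).add_const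
      (∫ τ in t₀..t, Ψ τ * Real.sinh τ)
  -- derivatives in t
  have hdt1 : HasDerivAt (fun τ => (xsurf θ Ψ s₀ t₀ s τ).1) 0 t := by
    simpa [xsurf] using hasDerivAt_const t (∫ τ in s₀..s, Real.cosh (θ τ))
  have hPc : HasDerivAt (fun x => ∫ τ in t₀..x, Ψ τ * Real.cosh τ)
      (Ψ t * Real.cosh t) t :=
    hasDerivAt_int (g := fun τ => Ψ τ * Real.cosh τ)
      (hΨc.mul Real.continuous_cosh.continuousOn) ht₀ ht
  have hPs : HasDerivAt (fun x => ∫ τ in t₀..x, Ψ τ * Real.sinh τ)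
      (Ψ t * Real.sinh t) t :=
    hasDerivAt_int (g := fun τ => Ψ τ * Real.sinh τ)
      (hΨc.mul Real.continuous_sinh.continuousOn) ht₀ ht
  have hdt2 : HasDerivAt (fun τ => (xsurf θ Ψ s₀ t₀ s τ).2.1)
      (G * Real.cosh t + Ψ t * Real.cosh t) t := by
    have h := ((Real.hasDerivAt_sinh t).const_mul G).add hPc
    exact h
  have hdt3 : HasDerivAt (fun τ => (xsurf θ Ψ s₀ t₀ s τ).2.2)
      (G * Real.sinh t + Ψ t * Real.sinh t) t := by
    have h := ((Real.hasDerivAt_cosh t).const_mul G).add hPs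
    exact h
  have hpds : pds (xsurf θ Ψ s₀ t₀) s t =
      (Real.cosh (θ s), Real.sinh (θ s) * Real.sinh t, Real.sinh (θ s) * Real.cosh t) := by
    simp [pds, hds1.deriv, hds2.deriv, hds3.deriv]
  have hpdt : pdt (xsurf θ Ψ s₀ t₀) s t =
      (0, (G + Ψ t) * Real.cosh t, (G + Ψ t) * Real.sinh t) := by
    simp only [pdt, hdt1.deriv, hdt2.deriv, hdt3.deriv, Prod.mk.injEq]
    exact ⟨trivial, by ring, by ring⟩
  have hc : Real.cosh (θ s) ^ 2 - Real.sinh (θ s) ^ 2 = 1 := Real.cosh_sq_sub_sinh_sq _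
  have hC : Real.cosh t ^ 2 - Real.sinh t ^ 2 = 1 := Real.cosh_sq_sub_sinh_sq _
  have hCpos : 0 < Real.cosh t := Real.cosh_pos t
  have hcpos : 0 < Real.cosh (θ s) := Real.cosh_pos (θ s)
  have h11 : mink (pds (xsurf θ Ψ s₀ t₀) s t) (pds (xsurf θ Ψ s₀ t₀) s t) = 1 := by
    rw [hpds]; simp only [mink]
    linear_combination hc - Real.sinh (θ s) ^ 2 * hC
  have h12 : mink (pds (xsurf θ Ψ s₀ t₀) s t) (pdt (xsurf θ Ψ s₀ t₀) s t) = 0 := by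
    rw [hpds, hpdt]; simp only [mink]; ring
  have h22 : mink (pdt (xsurf θ Ψ s₀ t₀) s t) (pdt (xsurf θ Ψ s₀ t₀) s t) =
      (G + Ψ t) ^ 2 := by
    rw [hpdt]; simp only [mink]
    linear_combination (G + Ψ t) ^ 2 * hC
  refine ⟨h11, h12, h22, ?_⟩
  intro hne
  constructor
  · rw [h11, h12, h22]
    have he2 : 0 < (G + Ψ t) ^ 2 :=
      lt_of_le_of_ne (sq_nonneg _) (Ne.symm (pow_ne_zero 2 hne))
    linarith
  · rintro ⟨n1, n2, n3⟩ hNu hNw hNN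
    rw [hpds] at hNu
    rw [hpdt] at hNw
    simp only [mink] at hNu hNw hNN
    set ch := Real.cosh (θ s)
    set sh := Real.sinh (θ s)
    set C := Real.cosh t
    set S := Real.sinh t
    have hw : n2 * C = n3 * S := by
      have h2 : (G + Ψ t) * (n2 * C - n3 * S) = 0 := by linear_combination hNw
      rcases mul_eq_zero.1 h2 with h | h
      · exact absurd h hne
      · linarith
    set k : ℝ := n3 / C with hk
    have hCne : C ≠ 0 := ne_of_gt hCpos
    have hchne : ch ≠ 0 := ne_of_gt hcpos
    have hn3 : n3 = k * C := by rw [hk, div_mul_cancel₀ n3 hCne]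
    have hn2 : n2 = k * S := by
      have h' : n2 * C = (k * S) * C := by rw [hw, hn3]; ring
      exact mul_right_cancel₀ hCne h'
    rw [hn2, hn3] at hNu hNN
    have hn1c : n1 * ch = k * sh := by linear_combination hNu + sh * k * hC
    have hk2 : k ^ 2 = n1 ^ 2 + 1 := by linear_combination (-1 : ℝ) * hNN - k ^ 2 * hC
    have hn1sq : n1 ^ 2 = sh ^ 2 := by
      linear_combination (n1 * ch + k * sh) * hn1c + sh ^ 2 * hk2 - n1 ^ 2 * hc
    have hksq : k ^ 2 = ch ^ 2 := by linear_combination hk2 + hn1sq - hc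
    have hn1k : n1 * k = ch * sh := by
      have h' : n1 * k * ch = (ch * sh) * ch := by
        linear_combination k * hn1c + sh * hksq
      exact mul_right_cancel₀ hchne h'
    refine ⟨ch, -n1, ?_⟩
    rw [hpds]
    simp only [Prod.smul_mk, smul_eq_mul, Prod.mk_add_mk, Prod.mk.injEq]
    refine ⟨?_, ?_, ?_⟩
    · linear_combination (-1 : ℝ) * hc + hn1sq
    · rw [hn2]; linear_combination S * hn1k
    · rw [hn3]; linear_combination C * hn1k
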